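/- Let φ be α-Hölder continuous on [0,1] with α ∈ (0,1]. Then there exists C > 0 such that N(r;φ) ≤ C r^{-1/α} for all r > 0, where N(r;φ) is the number of distinct intervals I_t associated to φ and r. -/

import Mathlib

open Set Classical

/-- The "stopping set" to the left of `t`: points of `[a,t]` where `|φ|` leaves `(r/4, 2r)`. -/
def badL (φ : ℝ → ℝ) (a r t : ℝ) : Set ℝ :=
  {s ∈ Set.Icc a t | |φ s| ≤ r / 4 ∨ 2 * r ≤ |φ s|}

/-- The "stopping set" to the right of `t`. -/
def badR (φ : ℝ → ℝ) (b r t : ℝ) : Set ℝ :=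
  {s ∈ Set.Icc t b | |φ s| ≤ r / 4 ∨ 2 * r ≤ |φ s|}

/-- `a_t`: the supremum of the left stopping set, or `a` if it is empty. -/
noncomputable def leftStop (φ : ℝ → ℝ) (a r t : ℝ) : ℝ :=
  if (badL φ a r t).Nonempty then sSup (badL φ a r t) else a

/-- `b_t`: the infimum of the right stopping set, or `b` if it is empty. -/
noncomputable def rightStop (φ : ℝ → ℝ) (b r t : ℝ) : ℝ :=
  if (badR φ b r t).Nonempty then sInf (badR φ b r t) else b

/-- The interval `I_t = (a_t, b_t)`, closed at an endpoint when that endpoint equals `a`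
(resp. `b`). -/
noncomputable def It (φ : ℝ → ℝ) (a b r t : ℝ) : Set ℝ :=
  {s : ℝ |
    (if leftStop φ a r t = a then leftStop φ a r t ≤ s else leftStop φ a r t < s) ∧
    (if rightStop φ b r t = b then s ≤ rightStop φ b r t else s < rightStop φ b r t)}

/-- `E_r = {t ∈ [a,b] : r/2 ≤ |φ(t)| ≤ r}`. -/
def Er (φ : ℝ → ℝ) (a b r : ℝ) : Set ℝ :=
  {t ∈ Set.Icc a b | r / 2 ≤ |φ t| ∧ |φ t| ≤ r}

/-- `N(r; φ)`: the number of distinct intervals `I_t`, `t ∈ E_r`. -/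
noncomputable def Ncount (φ : ℝ → ℝ) (a b r : ℝ) : ℕ :=
  (It φ a b r '' Er φ a b r).ncard

/-! Every point of `E_r` is at distance at least `δ = (r / 4K)^(1/α)` from the points where `|φ|`
leaves `(r/4, 2r)`. The interval `I_t` is determined by its left end `a_t`, and two distinct left
ends are `δ` apart, since the larger one is preceded by a bad point lying to the right of the
other `t`. So there are at most `1/δ + 1` intervals, and `E_r = ∅` once `r` exceeds `2 sup |φ|`. -/

theorem Set.ncard_image_le_ncard_image_of_eq_imp {α β γ : Type*} {s : Set α} {f : α → β}
    {g : α → γ} (hg : (g '' s).Finite) (hfg : ∀ a ∈ s, ∀ b ∈ s, g a = g b → f a = f b) :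
    (f '' s).ncard ≤ (g '' s).ncard := by
  cases isEmpty_or_nonempty α
  · simp [eq_empty_of_isEmpty s]
  have hf : f '' s = (fun c => f (Function.invFunOn g s c)) '' (g '' s) := by
    rw [image_image]
    exact image_congr fun a ha => (hfg _ (Function.invFunOn_mem ⟨a, ha, rfl⟩) a ha
      (Function.invFunOn_eq ⟨a, ha, rfl⟩)).symm
  rw [hf]
  exact ncard_image_le hg

theorem Set.finite_and_ncard_le_of_separated {s : Set ℝ} {a b δ : ℝ} (hab : a ≤ b) (hδ : 0 < δ)
    (hs : s ⊆ Icc a b) (hsep : s.Pairwise fun x y => δ ≤ |x - y|) :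
    s.Finite ∧ (s.ncard : ℝ) ≤ (b - a) / δ + 1 := by
  set n := ⌊(b - a) / δ⌋₊
  set f : ℝ → ℕ := fun x => ⌊(x - a) / δ⌋₊
  have hmaps : MapsTo f s (Finset.range (n + 1)) := fun x hx => by
    simp only [Finset.coe_range, mem_Iio, Nat.lt_add_one_iff, f, n]
    exact Nat.floor_le_floor (by gcongr; exact (hs hx).2)
  have hinj : InjOn f s := fun x hx y hy hxy => by
    by_contra hne
    have hx0 : 0 ≤ (x - a) / δ := div_nonneg (sub_nonneg.2 (hs hx).1) hδ.le
    have hy0 : 0 ≤ (y - a) / δ := div_nonneg (sub_nonneg.2 (hs hy).1) hδ.le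
    have hfloor : ⌊(x - a) / δ⌋ = ⌊(y - a) / δ⌋ := by
      rw [← Int.natCast_floor_eq_floor hx0, ← Int.natCast_floor_eq_floor hy0]
      exact congrArg Nat.cast hxy
    have hlt := Int.abs_sub_lt_one_of_floor_eq_floor hfloor
    rw [← sub_div, sub_sub_sub_cancel_right, abs_div, abs_of_pos hδ, div_lt_one hδ] at hlt
    exact (hsep hx hy hne).not_gt hlt
  refine ⟨Finite.of_injOn hmaps hinj (Finset.finite_toSet _), ?_⟩
  have hcard : s.ncard ≤ n + 1 := by
    simpa using ncard_le_ncard_of_injOn f hmaps hinj (Finset.finite_toSet _)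
  calc (s.ncard : ℝ) ≤ n + 1 := by exact_mod_cast hcard
    _ ≤ (b - a) / δ + 1 := by
      gcongr
      exact Nat.floor_le (div_nonneg (sub_nonneg.2 hab) hδ.le)

def BadPointsSeparated (φ : ℝ → ℝ) (a b r δ : ℝ) : Prop :=
  ∀ t ∈ Er φ a b r, ∀ p ∈ Icc a b, (|φ p| ≤ r / 4 ∨ 2 * r ≤ |φ p|) → δ ≤ |p - t|

section Stops

variable {φ : ℝ → ℝ} {a b r δ t u : ℝ}

theorem leftStop_mem_Icc (ht : a ≤ t) : leftStop φ a r t ∈ Icc a t := by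
  unfold leftStop
  split_ifs with h
  · obtain ⟨p, hp⟩ := h
    exact ⟨hp.1.1.trans (le_csSup ⟨t, fun _ hq => hq.1.2⟩ hp), csSup_le ⟨p, hp⟩ fun _ hq => hq.1.2⟩
  · exact ⟨le_rfl, ht⟩

theorem le_leftStop {p : ℝ} (hp : p ∈ badL φ a r t) : p ≤ leftStop φ a r t := by
  rw [leftStop, if_pos ⟨p, hp⟩]
  exact le_csSup ⟨t, fun _ hq => hq.1.2⟩ hp

theorem exists_mem_badL_gt_of_lt_leftStop {x : ℝ} (hx : a ≤ x) (h : x < leftStop φ a r t) :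
    ∃ p ∈ badL φ a r t, x < p := by
  unfold leftStop at h
  split_ifs at h with hne
  · exact exists_lt_of_lt_csSup hne h
  · exact absurd h hx.not_gt

theorem not_bad_of_mem_Er (hr : 0 < r) (ht : t ∈ Er φ a b r) :
    ¬(|φ t| ≤ r / 4 ∨ 2 * r ≤ |φ t|) := by
  obtain ⟨-, h1, h2⟩ := ht
  push Not
  constructor <;> linarith

/-- A bad point in `[t, u)` would lie in `[a_u, u] = [a_t, u]` and hence equal `t`. -/
theorem badR_eq_of_leftStop_eq (hr : 0 < r) (ht : t ∈ Er φ a b r) (htu : t ≤ u)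
    (h : leftStop φ a r t = leftStop φ a r u) : badR φ b r t = badR φ b r u := by
  refine Subset.antisymm (fun p hp => ?_) fun p hp => ⟨⟨htu.trans hp.1.1, hp.1.2⟩, hp.2⟩
  refine ⟨⟨le_of_not_gt fun hpu => ?_, hp.1.2⟩, hp.2⟩
  have hpL : p ≤ leftStop φ a r u := le_leftStop ⟨⟨ht.1.1.trans hp.1.1, hpu.le⟩, hp.2⟩
  have hpt : p = t := le_antisymm (h ▸ hpL |>.trans (leftStop_mem_Icc ht.1.1).2) hp.1.1
  exact not_bad_of_mem_Er hr ht (hpt ▸ hp.2)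

theorem It_eq_of_leftStop_eq (hr : 0 < r) (ht : t ∈ Er φ a b r) (hu : u ∈ Er φ a b r)
    (h : leftStop φ a r t = leftStop φ a r u) : It φ a b r t = It φ a b r u := by
  have hbadR : badR φ b r t = badR φ b r u := by
    rcases le_total t u with htu | hut
    · exact badR_eq_of_leftStop_eq hr ht htu h
    · exact (badR_eq_of_leftStop_eq hr hu hut h.symm).symm
  have hright : rightStop φ b r t = rightStop φ b r u := by rw [rightStop, rightStop, hbadR]
  rw [It, It, h, hright]

theorem BadPointsSeparated.leftStop_add_le (hsep : BadPointsSeparated φ a b r δ)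
    (ht : t ∈ Er φ a b r) (hu : u ∈ Er φ a b r) (hlt : leftStop φ a r t < leftStop φ a r u) :
    leftStop φ a r t + δ ≤ leftStop φ a r u := by
  obtain ⟨hat, hta⟩ := leftStop_mem_Icc (φ := φ) (r := r) ht.1.1
  obtain ⟨p, hp, hp_gt⟩ := exists_mem_badL_gt_of_lt_leftStop hat hlt
  have htp : t < p := lt_of_not_ge fun hpt => hp_gt.not_ge (le_leftStop ⟨⟨hp.1.1, hpt⟩, hp.2⟩)
  have hdist := hsep t ht p ⟨hp.1.1, hp.1.2.trans hu.1.2⟩ hp.2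
  rw [abs_of_pos (sub_pos.2 htp)] at hdist
  linarith [le_leftStop hp]

theorem BadPointsSeparated.Ncount_le (hsep : BadPointsSeparated φ a b r δ) (hr : 0 < r)
    (hδ : 0 < δ) (hab : a ≤ b) : (Ncount φ a b r : ℝ) ≤ (b - a) / δ + 1 := by
  have hsub : leftStop φ a r '' Er φ a b r ⊆ Icc a b := by
    rintro _ ⟨t, ht, rfl⟩
    exact ⟨(leftStop_mem_Icc ht.1.1).1, (leftStop_mem_Icc ht.1.1).2.trans ht.1.2⟩
  have hpair : (leftStop φ a r '' Er φ a b r).Pairwise fun x y => δ ≤ |x - y| := by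
    rintro _ ⟨t, ht, rfl⟩ _ ⟨u, hu, rfl⟩ hne
    rcases hne.lt_or_gt with h | h
    · rw [abs_sub_comm, abs_of_pos (sub_pos.2 h)]
      linarith [hsep.leftStop_add_le ht hu h]
    · rw [abs_of_pos (sub_pos.2 h)]
      linarith [hsep.leftStop_add_le hu ht h]
  obtain ⟨hfin, hcard⟩ := finite_and_ncard_le_of_separated hab hδ hsub hpair
  calc (Ncount φ a b r : ℝ) ≤ (leftStop φ a r '' Er φ a b r).ncard := by
        exact_mod_cast ncard_image_le_ncard_image_of_eq_imp hfin
          fun t ht u hu => It_eq_of_leftStop_eq hr ht hu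
    _ ≤ (b - a) / δ + 1 := hcard

end Stops

section Holder

variable {φ : ℝ → ℝ} {K α r : ℝ}

theorem badPointsSeparated_of_holder {a b : ℝ} (hK : 0 < K) (hα : 0 < α)
    (hφ : ∀ s ∈ Icc a b, ∀ t ∈ Icc a b, |φ s - φ t| ≤ K * |s - t| ^ α) :
    BadPointsSeparated φ a b r ((r / (4 * K)) ^ (1 / α)) := by
  intro t ht p hp hbad
  obtain ⟨htab, hrt, htr⟩ := ht
  have hjump : r / 4 ≤ |φ p - φ t| := by
    have := abs_sub_abs_le_abs_sub (φ t) (φ p)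
    have := abs_sub_abs_le_abs_sub (φ p) (φ t)
    rcases hbad with h | h <;> linarith [abs_sub_comm (φ p) (φ t)]
  have hle : r / (4 * K) ≤ |p - t| ^ α := by
    rw [div_le_iff₀ (by positivity)]
    linarith [hφ p hp t htab]
  calc (r / (4 * K)) ^ (1 / α) ≤ (|p - t| ^ α) ^ (1 / α) := by
        gcongr
        exact div_nonneg (by linarith [abs_nonneg (φ t)]) (by positivity)
    _ = |p - t| := by rw [one_div, Real.rpow_rpow_inv (abs_nonneg _) hα.ne']

theorem le_of_mem_Er_of_holder {t : ℝ} (hK : 0 ≤ K) (hα : 0 < α)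
    (hφ : ∀ s ∈ Icc (0:ℝ) 1, ∀ t ∈ Icc (0:ℝ) 1, |φ s - φ t| ≤ K * |s - t| ^ α)
    (ht : t ∈ Er φ 0 1 r) : r ≤ 2 * (|φ 0| + K) := by
  obtain ⟨⟨ht0, ht1⟩, hrt, -⟩ := ht
  have hpow : |t - 0| ^ α ≤ 1 :=
    Real.rpow_le_one (abs_nonneg _) (by rwa [sub_zero, abs_of_nonneg ht0]) hα.le
  have := hφ t ⟨ht0, ht1⟩ 0 ⟨le_rfl, zero_le_one⟩
  have := abs_sub_abs_le_abs_sub (φ t) (φ 0)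
  linarith [mul_le_of_le_one_right hK hpow]

end Holder

theorem one_div_div_rpow_add_one_le {r R c β : ℝ} (hr : 0 < r) (hrR : r ≤ R) (hc : 0 < c)
    (hβ : 0 ≤ β) : 1 / (r / c) ^ β + 1 ≤ (R ^ β + c ^ β) * r ^ (-β) := by
  have hc_term : 1 / (r / c) ^ β = c ^ β * r ^ (-β) := by
    rw [Real.div_rpow hr.le hc.le, one_div_div, Real.rpow_neg hr.le, div_eq_mul_inv]
  have hR_term : 1 ≤ R ^ β * r ^ (-β) := by
    rw [Real.rpow_neg hr.le, ← div_eq_mul_inv, one_le_div (by positivity)]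
    gcongr
  rw [hc_term, add_mul]
  linarith

/-- if `φ` is `α`-Hölder on `[0,1]` with `α ∈ (0,1]`, then
`N(r;φ) ≤ C r^{-1/α}` for all `r > 0`. -/
theorem Ncount_le_of_holder (α : ℝ) (hα : α ∈ Set.Ioc (0:ℝ) 1) (φ : ℝ → ℝ) (K : ℝ)
    (hφ : ∀ s ∈ Set.Icc (0:ℝ) 1, ∀ t ∈ Set.Icc (0:ℝ) 1, |φ s - φ t| ≤ K * |s - t| ^ α) :
    ∃ C : ℝ, 0 < C ∧ ∀ r : ℝ, 0 < r → (Ncount φ 0 1 r : ℝ) ≤ C * r ^ (-(1 / α)) := by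
  obtain ⟨hα0, -⟩ := hα
  set K' := max K 1
  have hK' : 0 < K' := zero_lt_one.trans_le (le_max_right K 1)
  have hφ' : ∀ s ∈ Icc (0:ℝ) 1, ∀ t ∈ Icc (0:ℝ) 1, |φ s - φ t| ≤ K' * |s - t| ^ α :=
    fun s hs t ht => (hφ s hs t ht).trans (by gcongr; exact le_max_left K 1)
  refine ⟨(2 * (|φ 0| + K')) ^ (1 / α) + (4 * K') ^ (1 / α), by positivity, fun r hr => ?_⟩
  rcases (Er φ 0 1 r).eq_empty_or_nonempty with hE | ⟨t, ht⟩
  · rw [Ncount, hE, image_empty, ncard_empty, Nat.cast_zero]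
    positivity
  calc (Ncount φ 0 1 r : ℝ) ≤ (1 - 0) / (r / (4 * K')) ^ (1 / α) + 1 :=
        (badPointsSeparated_of_holder hK' hα0 hφ').Ncount_le hr (by positivity) zero_le_one
    _ ≤ _ := by
      rw [sub_zero]
      exact one_div_div_rpow_add_one_le hr (le_of_mem_Er_of_holder hK'.le hα0 hφ' ht)
        (by positivity) (by positivity)
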